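/- arXiv:math/0612751 — 2 statements merged into one kernel-verified Lean document; each statement's English description precedes it below -/
import Mathlib

section
/- If a graph G on n vertices satisfies: (a) every vertex subset S with |S| ≤ n/(d·m) has external neighborhood of size at least d|S|, and (b) any two disjoint vertex subsets of size at least n/(4130·m) are joined by an edge (for some parameters d ≥ 2 and m ≥ 1 with n/(d·m) ≥ 1), then G is connected. -/
open Finset

/-- The external neighborhood of a finite vertex set `S`: vertices outside `S`
with a neighbor in `S`. -/
def extNbhd {V : Type*} [Fintype V] [DecidableEq V] (G : SimpleGraph V)
    [DecidableRel G.Adj] (S : Finset V) : Finset V :=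
  Finset.univ.filter fun v => v ∉ S ∧ ∃ u ∈ S, G.Adj u v

/-!
Proof idea: a connected component `C` has no external neighbours, so P1 forces `|C| > n/(dm)`.
Then `C` contains a set `S` of size `⌊n/(dm)⌋ ≥ n/(2dm)`, and `N(S) ⊆ C` gives
`|C| ≥ d|S| ≥ n/(2m) ≥ n/(4130m)`. Two distinct components are disjoint sets of that size with
no edge between them, contradicting P2.
-/

namespace extNbhd

variable {V : Type*} [Fintype V] [DecidableEq V] {G : SimpleGraph V} [DecidableRel G.Adj]

theorem disjoint_self (S : Finset V) : Disjoint S (extNbhd G S) :=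
  Finset.disjoint_right.2 fun _ hw => (Finset.mem_filter.1 hw).2.1

theorem subset_of_subset_of_eq_empty {S T : Finset V} (hST : S ⊆ T) (hT : extNbhd G T = ∅) :
    extNbhd G S ⊆ T := by
  intro w hw
  obtain ⟨-, hwS, u, huS, huw⟩ := Finset.mem_filter.1 hw
  by_contra hwT
  have : w ∈ extNbhd G T := Finset.mem_filter.2 ⟨mem_univ w, hwT, u, hST huS, huw⟩
  simp [hT] at this

theorem card_add_card_le_of_eq_empty {S T : Finset V} (hST : S ⊆ T) (hT : extNbhd G T = ∅) :
    #S + #(extNbhd G S) ≤ #T := by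
  rw [← card_union_of_disjoint (disjoint_self S)]
  exact card_le_card (union_subset hST (subset_of_subset_of_eq_empty hST hT))

theorem reachable_eq_empty (v : V) : extNbhd G (univ.filter (G.Reachable v)) = ∅ := by
  refine Finset.eq_empty_of_forall_notMem fun w hw => ?_
  obtain ⟨-, hwC, u, huC, huw⟩ := Finset.mem_filter.1 hw
  simp only [mem_filter, mem_univ, true_and] at hwC huC
  exact hwC (huC.trans huw.reachable)

variable {d x : ℝ} (hd : 0 < d)
  (hP1 : ∀ S : Finset V, (#S : ℝ) ≤ x → d * #S ≤ #(extNbhd G S))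
include hd hP1

theorem lt_card_of_eq_empty {T : Finset V} (hT : T.Nonempty) (hTc : extNbhd G T = ∅) :
    x < #T := by
  by_contra! hTx
  have h := hP1 T hTx
  rw [hTc, card_empty, Nat.cast_zero] at h
  have : (0 : ℝ) < #T := by exact_mod_cast hT.card_pos
  nlinarith

theorem half_mul_le_card_of_eq_empty (hx : 1 ≤ x) {T : Finset V} (hT : T.Nonempty)
    (hTc : extNbhd G T = ∅) : d * x / 2 ≤ #T := by
  set k := ⌊x⌋₊
  have hkx : (k : ℝ) ≤ x := Nat.floor_le (by linarith)
  have hk1 : (1 : ℝ) ≤ k := by exact_mod_cast Nat.le_floor (by simpa using hx)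
  -- `k > x - 1` and `k ≥ 1` together give `2k > x`.
  have hxk : x / 2 ≤ k := by linarith [Nat.sub_one_lt_floor x]
  have hkT : k ≤ #T := by exact_mod_cast hkx.trans (lt_card_of_eq_empty hd hP1 hT hTc).le
  obtain ⟨S, hST, hSk⟩ := exists_subset_card_eq hkT
  have hexp : d * k ≤ #(extNbhd G S) := hSk ▸ hP1 S (hSk ▸ hkx)
  have hcard : (#S + #(extNbhd G S) : ℝ) ≤ #T := by
    exact_mod_cast card_add_card_le_of_eq_empty hST hTc
  calc d * x / 2 = d * (x / 2) := by ring
    _ ≤ d * k := by gcongr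
    _ ≤ #T := by linarith [Nat.cast_nonneg (α := ℝ) #S]

end extNbhd

theorem SimpleGraph.connected_of_reachable_card_ge {V : Type*} [Fintype V] [DecidableEq V]
    [Nonempty V] (G : SimpleGraph V) [DecidableRel G.Adj] (y : ℝ) (hC : ∀ v, y ≤ #(univ.filter (G.Reachable v)))
    (hP2 : ∀ A B : Finset V, Disjoint A B → y ≤ #A → y ≤ #B → ∃ a ∈ A, ∃ b ∈ B, G.Adj a b) :
    G.Connected := by
  refine (connected_iff G).2 ⟨fun u v => ?_, ‹_›⟩
  by_contra huv
  have hdisj : Disjoint (univ.filter (G.Reachable u)) (univ.filter (G.Reachable v)) := by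
    exact disjoint_filter.2 fun w _ huw hvw => huv (huw.trans hvw.symm)
  obtain ⟨a, ha, b, hb, hab⟩ := hP2 _ _ hdisj (hC u) (hC v)
  simp only [mem_filter, mem_univ, true_and] at ha hb
  exact huv ((ha.trans hab.reachable).trans hb.symm)

/-- If a graph `G` on `n` vertices satisfies P1 (every set of size at most `n/(d·m)`
expands by a factor of `d`) and P2 (any two disjoint sets of size at least
`n/(4130·m)` are joined by an edge), with `d ≥ 2`, `m ≥ 1`, `n/(d·m) ≥ 1`,
then `G` is connected. -/
theorem stmt0 {V : Type*} [Fintype V] [DecidableEq V] (G : SimpleGraph V)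
    [DecidableRel G.Adj] (n : ℕ) (hn : Fintype.card V = n)
    (d m : ℝ) (hd : 2 ≤ d) (hm : 1 ≤ m) (hdm : 1 ≤ (n : ℝ) / (d * m))
    (hP1 : ∀ S : Finset V, (S.card : ℝ) ≤ (n : ℝ) / (d * m) →
      d * S.card ≤ ((extNbhd G S).card : ℝ))
    (hP2 : ∀ A B : Finset V, Disjoint A B → (n : ℝ) / (4130 * m) ≤ A.card →
      (n : ℝ) / (4130 * m) ≤ B.card → ∃ a ∈ A, ∃ b ∈ B, G.Adj a b) :
    G.Connected := by
  have hd0 : 0 < d := by linarith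
  have hm0 : 0 < m := by linarith
  have hn0 : n ≠ 0 := by rintro rfl; norm_num at hdm
  have : Nonempty V := Fintype.card_pos_iff.1 (by omega)
  refine G.connected_of_reachable_card_ge _ (fun v => ?_) hP2
  calc (n : ℝ) / (4130 * m) ≤ n / (2 * m) := by gcongr; norm_num
    _ = d * (n / (d * m)) / 2 := by field_simp
    _ ≤ _ := extNbhd.half_mul_le_card_of_eq_empty hd0 hP1 hdm ⟨v, by simp⟩
      (extNbhd.reachable_eq_empty v)
end

section
/- Let G be the disjoint union of a complete graph on n - s + 1 vertices and s - 1 isolated vertices, where 2 ≤ s ≤ n/2. Then any two disjoint vertex subsets A, B of G with |A|, |B| ≥ s are joined by an edge, yet G is not Hamiltonian (for n ≥ 3). -/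
/-- The graph on `Fin n` consisting of a clique on the first `n - s + 1` vertices
together with `s - 1` isolated vertices. -/
def cliquePlusIsolated (n s : ℕ) : SimpleGraph (Fin n) :=
  SimpleGraph.fromRel fun u v => (u : ℕ) < n - s + 1 ∧ (v : ℕ) < n - s + 1

lemma cliquePlusIsolated_walk {n s : ℕ} {u v : Fin n}
    (p : (cliquePlusIsolated n s).Walk u v) (hu : (u : ℕ) < n - s + 1) :
    (v : ℕ) < n - s + 1 := by
  induction p with
  | nil => exact hu
  | cons h p ih =>
    rcases h with ⟨_, ⟨_, h2⟩ | ⟨h2, _⟩⟩ <;> exact ih h2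

lemma exists_small {n s : ℕ} (hsn : 2 * s ≤ n) (hs2 : 2 ≤ s) (A : Finset (Fin n))
    (hA : s ≤ A.card) : ∃ a ∈ A, (a : ℕ) < n - s + 1 := by
  by_contra hc
  push_neg at hc
  have hsub : A.image Fin.val ⊆ Finset.Ico (n - s + 1) n := by
    intro x hx
    simp only [Finset.mem_image] at hx
    obtain ⟨a, ha, rfl⟩ := hx
    exact Finset.mem_Ico.mpr ⟨hc a ha, a.isLt⟩
  have h1 : A.card = (A.image Fin.val).card :=
    (Finset.card_image_of_injective A Fin.val_injective).symm
  have h2 := Finset.card_le_card hsub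
  rw [Nat.card_Ico] at h2
  omega

/-- Let `G` be the disjoint union of a complete graph on `n - s + 1` vertices and
`s - 1` isolated vertices, where `2 ≤ s ≤ n/2` and `n ≥ 3`. Then any two disjoint
vertex subsets `A`, `B` with `|A|, |B| ≥ s` are joined by an edge, yet `G` is not
Hamiltonian. -/
theorem stmt2 (n s : ℕ) (hs2 : 2 ≤ s) (hsn : 2 * s ≤ n) (hn : 3 ≤ n) :
    (∀ A B : Finset (Fin n), Disjoint A B → s ≤ A.card → s ≤ B.card →
      ∃ a ∈ A, ∃ b ∈ B, (cliquePlusIsolated n s).Adj a b) ∧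
    ¬ (cliquePlusIsolated n s).IsHamiltonian := by
  constructor
  · intro A B hAB hA hB
    obtain ⟨a, haA, ha⟩ := exists_small hsn hs2 A hA
    obtain ⟨b, hbB, hb⟩ := exists_small hsn hs2 B hB
    refine ⟨a, haA, b, hbB, ?_, Or.inl ⟨ha, hb⟩⟩
    rintro rfl
    exact Finset.disjoint_left.mp hAB haA hbB
  · intro h
    obtain ⟨a, p, hp⟩ := h (by simp; omega)
    set v0 : Fin n := ⟨0, by omega⟩
    set v1 : Fin n := ⟨n - 1, by omega⟩
    have h0 : v0 ∈ p.support := hp.mem_support v0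
    have h1 : v1 ∈ p.support := hp.mem_support v1
    have w0 := p.takeUntil v0 h0
    have w1 := p.takeUntil v1 h1
    have hr : (cliquePlusIsolated n s).Reachable v0 v1 :=
      ⟨w0.reverse.append w1⟩
    obtain ⟨q⟩ := hr
    have := cliquePlusIsolated_walk q (by simp [v0])
    simp [v1] at this
    omega
end
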